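/- Let σ > 0, s₁,…,s_m ∈ ℝ, λ* ∈ ℝ^m, and q(t) = ∑_{j=1}^m λ*_j φ(t − s_j) where φ(t) = exp(−t²/σ²). Let t* ∈ ℝ satisfy q''(t*) ≠ 0, set c = 4√(9 − 3√6)·e^{−(3−√6)/2}, and δ₀ = σ²|q''(t*)| / (√m·(4 + 2c‖λ*‖₂/σ)). Then for all t ∈ ℝ with |t − t*| ≤ δ₀ and all λ ∈ ℝ^m with ‖λ − λ*‖₂ ≤ δ₀, one has |1 − (∑_{j=1}^m λ_j φ''(t − s_j)) / (∑_{j=1}^m λ*_j φ''(t* − s_j))| ≤ 1/2. -/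

import Mathlib

open Real

lemma hasD0 (σ : ℝ) (hσ : 0 < σ) (x : ℝ) :
    HasDerivAt (fun t : ℝ => Real.exp (-t ^ 2 / σ ^ 2)) ((-2*x/σ^2) * Real.exp (-x^2/σ^2)) x := by
  have h : HasDerivAt (fun t : ℝ => -t ^ 2 / σ ^ 2) (-2*x/σ^2) x := by
    have := (hasDerivAt_pow 2 x).neg.div_const (σ^2)
    simpa [mul_comm] using this
  simpa [mul_comm] using h.exp

lemma deriv1 (σ : ℝ) (hσ : 0 < σ) :
    deriv (fun t : ℝ => Real.exp (-t ^ 2 / σ ^ 2))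
      = fun x => (-2*x/σ^2) * Real.exp (-x^2/σ^2) :=
  funext fun x => (hasD0 σ hσ x).deriv

lemma hasD1 (σ : ℝ) (hσ : 0 < σ) (x : ℝ) :
    HasDerivAt (deriv (fun t : ℝ => Real.exp (-t ^ 2 / σ ^ 2)))
      ((4*x^2/σ^4 - 2/σ^2) * Real.exp (-x^2/σ^2)) x := by
  rw [deriv1 σ hσ]
  have h1 : HasDerivAt (fun t : ℝ => -2*t/σ^2) (-2/σ^2) x := by
    simpa using ((hasDerivAt_id x).const_mul (-2 : ℝ)).div_const (σ^2)
  have := h1.mul (hasD0 σ hσ x)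
  refine this.congr_deriv ?_
  ring

lemma deriv2 (σ : ℝ) (hσ : 0 < σ) :
    deriv (deriv (fun t : ℝ => Real.exp (-t ^ 2 / σ ^ 2)))
      = fun x => (4*x^2/σ^4 - 2/σ^2) * Real.exp (-x^2/σ^2) :=
  funext fun x => (hasD1 σ hσ x).deriv

lemma hasD2 (σ : ℝ) (hσ : 0 < σ) (x : ℝ) :
    HasDerivAt (deriv (deriv (fun t : ℝ => Real.exp (-t ^ 2 / σ ^ 2))))
      ((12*x/σ^4 - 8*x^3/σ^6) * Real.exp (-x^2/σ^2)) x := by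
  rw [deriv2 σ hσ]
  have h1 : HasDerivAt (fun t : ℝ => 4*t^2/σ^4 - 2/σ^2) (8*x/σ^4) x := by
    have := ((hasDerivAt_pow 2 x).const_mul (4:ℝ)).div_const (σ^4)
    exact (this.sub_const (2/σ^2)).congr_deriv (by push_cast; ring)
  have := h1.mul (hasD0 σ hσ x)
  refine this.congr_deriv ?_
  have hσ' : σ ≠ 0 := ne_of_gt hσ
  field_simp
  ring

lemma aux2 (u : ℝ) : |(4*u^2 - 2) * Real.exp (-u^2)| ≤ 2 := by
  have hE : Real.exp (-u^2) * Real.exp (u^2) = 1 := by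
    rw [← Real.exp_add]; simp
  have hEpos := Real.exp_pos (-u^2)
  have hE1 : Real.exp (-u^2) ≤ 1 := Real.exp_le_one_iff.2 (by nlinarith [sq_nonneg u])
  have hq : (1 + u^2/2)^2 ≤ Real.exp (u^2) := by
    have h1 : 1 + u^2/2 ≤ Real.exp (u^2/2) := by
      have := Real.add_one_le_exp (u^2/2); linarith
    calc (1 + u^2/2)^2 ≤ (Real.exp (u^2/2))^2 := by nlinarith [Real.exp_pos (u^2/2)]
    _ = Real.exp (u^2) := by rw [sq, ← Real.exp_add]; ring_nf
  rw [abs_le]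
  constructor
  · nlinarith [mul_nonneg (sq_nonneg u) hEpos.le]
  · nlinarith [hE, hEpos, hq, sq_nonneg (u^2-2), Real.exp_pos (u^2)]

lemma auxmax (r v : ℝ) (hr : 4*r^2 - 12*r + 3 = 0) (hr1 : 1/4 ≤ r) (hr2 : r ≤ 3/10)
    (hv : 0 ≤ v) :
    v*(12 - 8*v)^2 * Real.exp (-(2*v)) ≤ 96*r*Real.exp (-(2*r)) := by
  have hrpos : 0 < r := by linarith
  have hre : Real.exp (-(2*v)) * Real.exp (2*v - 2*r) = Real.exp (-(2*r)) := by
    rw [← Real.exp_add]; ring_nf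
  have hEpos := Real.exp_pos (-(2*v))
  rcases le_or_gt v r with hcase | hcase
  · -- v ≤ r
    have hx : 1 + 2*v - 2*r ≤ Real.exp (2*v - 2*r) := by
      have := Real.add_one_le_exp (2*v - 2*r); linarith
    have hfac : 0 ≤ (v-r)^2*(192 - 128*r - 64*v) :=
      mul_nonneg (sq_nonneg _) (by nlinarith)
    have heq : 96*r*(1 + 2*v - 2*r) - v*(12 - 8*v)^2
        = (v-r)^2*(192 - 128*r - 64*v) + (32*r - 48*v)*(4*r^2 - 12*r + 3) := by ring
    have poly : v*(12 - 8*v)^2 ≤ 96*r*(1 + 2*v - 2*r) := by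
      rw [hr, mul_zero, add_zero] at heq; linarith
    calc v*(12 - 8*v)^2 * Real.exp (-(2*v))
        ≤ (96*r*(1 + 2*v - 2*r)) * Real.exp (-(2*v)) :=
          mul_le_mul_of_nonneg_right poly hEpos.le
      _ ≤ (96*r*Real.exp (2*v - 2*r)) * Real.exp (-(2*v)) := by
          apply mul_le_mul_of_nonneg_right _ hEpos.le
          apply mul_le_mul_of_nonneg_left hx (by linarith)
      _ = 96*r*Real.exp (-(2*r)) := by rw [mul_assoc, mul_comm (Real.exp (2*v-2*r)), hre]
  · -- r < v
    have hw : 0 ≤ v - r := by linarith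
    have h8 : (1 + (v-r)/4)^8 ≤ Real.exp (2*(v-r)) := by
      have h1 : 1 + (v-r)/4 ≤ Real.exp ((v-r)/4) := by
        have := Real.add_one_le_exp ((v-r)/4); linarith
      have h0 : (0:ℝ) ≤ 1 + (v-r)/4 := by linarith
      calc (1 + (v-r)/4)^8 ≤ (Real.exp ((v-r)/4))^8 := pow_le_pow_left₀ h0 h1 8
        _ = Real.exp (2*(v-r)) := by
            rw [← Real.exp_nat_mul]; congr 1; push_cast; ring
    have htrunc : 1 + 2*(v-r) + (7/4)*(v-r)^2 + (7/8)*(v-r)^3 + (35/128)*(v-r)^4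
        ≤ (1 + (v-r)/4)^8 := by
      nlinarith [pow_nonneg hw 5, pow_nonneg hw 6, pow_nonneg hw 7, pow_nonneg hw 8]
    have hquad : 0 ≤ (v-r)^2 * ((105*r/4)*(v-r)^2 + (84*r-64)*(v-r) + (192-24*r)) := by
      apply mul_nonneg (sq_nonneg _)
      nlinarith [sq_nonneg (105*r*(v-r) + 168*r - 128), hr, hrpos, hr1, sq_nonneg (v-r), mul_nonneg hrpos.le hw]
    have heq : 96*r*(1 + 2*(v-r) + (7/4)*(v-r)^2 + (7/8)*(v-r)^3 + (35/128)*(v-r)^4)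
          - v*(12 - 8*v)^2
        = (v-r)^2 * ((105*r/4)*(v-r)^2 + (84*r-64)*(v-r) + (192-24*r))
          + (-16*r - 48*(v-r))*(4*r^2 - 12*r + 3) := by ring
    rw [hr, mul_zero, add_zero] at heq
    have poly : v*(12 - 8*v)^2
        ≤ 96*r*(1 + 2*(v-r) + (7/4)*(v-r)^2 + (7/8)*(v-r)^3 + (35/128)*(v-r)^4) := by
      linarith
    have hx : 1 + 2*(v-r) + (7/4)*(v-r)^2 + (7/8)*(v-r)^3 + (35/128)*(v-r)^4
        ≤ Real.exp (2*v - 2*r) := by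
      have : (2:ℝ)*(v-r) = 2*v - 2*r := by ring
      rw [← this]; exact le_trans htrunc h8
    calc v*(12 - 8*v)^2 * Real.exp (-(2*v))
        ≤ (96*r*(1 + 2*(v-r) + (7/4)*(v-r)^2 + (7/8)*(v-r)^3 + (35/128)*(v-r)^4))
            * Real.exp (-(2*v)) := mul_le_mul_of_nonneg_right poly hEpos.le
      _ ≤ (96*r*Real.exp (2*v - 2*r)) * Real.exp (-(2*v)) := by
          apply mul_le_mul_of_nonneg_right _ hEpos.le
          apply mul_le_mul_of_nonneg_left hx (by linarith)
      _ = 96*r*Real.exp (-(2*r)) := by rw [mul_assoc, mul_comm (Real.exp (2*v-2*r)), hre]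

lemma aux3 (u : ℝ) : |(12*u - 8*u^3) * Real.exp (-u^2)|
    ≤ 4 * Real.sqrt (9 - 3*Real.sqrt 6) * Real.exp (-((3 - Real.sqrt 6)/2)) := by
  have hs6 : (Real.sqrt 6)^2 = 6 := Real.sq_sqrt (by norm_num)
  have h6lo : 2 ≤ Real.sqrt 6 := by
    nlinarith [Real.sqrt_nonneg 6, hs6]
  have h6hi : Real.sqrt 6 ≤ 5/2 := by
    nlinarith [Real.sqrt_nonneg 6, hs6]
  set r : ℝ := (3 - Real.sqrt 6)/2 with hrdef
  have hr : 4*r^2 - 12*r + 3 = 0 := by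
    rw [hrdef]; nlinarith [hs6]
  have hr1 : 1/4 ≤ r := by rw [hrdef]; linarith
  have hr2 : r ≤ 3/10 := by rw [hrdef]; nlinarith [hs6, Real.sqrt_nonneg 6]
  have h9 : (0:ℝ) ≤ 9 - 3*Real.sqrt 6 := by linarith
  have hc0 : (0:ℝ) ≤ 4 * Real.sqrt (9 - 3*Real.sqrt 6) * Real.exp (-r) := by positivity
  have hc2 : (4 * Real.sqrt (9 - 3*Real.sqrt 6) * Real.exp (-r))^2
      = 96*r*Real.exp (-(2*r)) := by
    have : Real.exp (-r)^2 = Real.exp (-(2*r)) := by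
      rw [sq, ← Real.exp_add]; ring_nf
    rw [mul_pow, mul_pow, Real.sq_sqrt h9, this, hrdef]
    ring
  have key := auxmax r (u^2) hr hr1 hr2 (sq_nonneg u)
  have hsq : ((12*u - 8*u^3) * Real.exp (-u^2))^2 = u^2*(12 - 8*u^2)^2 * Real.exp (-(2*u^2)) := by
    rw [mul_pow]
    have : Real.exp (-u^2)^2 = Real.exp (-(2*u^2)) := by rw [sq, ← Real.exp_add]; ring_nf
    rw [this]; ring
  calc |(12*u - 8*u^3) * Real.exp (-u^2)|
      = Real.sqrt (((12*u - 8*u^3) * Real.exp (-u^2))^2) := (Real.sqrt_sq_eq_abs _).symm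
    _ ≤ Real.sqrt ((4 * Real.sqrt (9 - 3*Real.sqrt 6) * Real.exp (-r))^2) := by
        apply Real.sqrt_le_sqrt
        rw [hsq, hc2]; exact key
    _ = 4 * Real.sqrt (9 - 3*Real.sqrt 6) * Real.exp (-r) := Real.sqrt_sq hc0

lemma bound2 (σ : ℝ) (hσ : 0 < σ) (x : ℝ) :
    |deriv (deriv (fun t : ℝ => Real.exp (-t ^ 2 / σ ^ 2))) x| ≤ 2/σ^2 := by
  rw [deriv2 σ hσ]
  show |(4*x^2/σ^4 - 2/σ^2) * Real.exp (-x^2/σ^2)| ≤ 2/σ^2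
  have hσ' : σ ≠ 0 := ne_of_gt hσ
  have hrw : (4*x^2/σ^4 - 2/σ^2) * Real.exp (-x^2/σ^2)
      = (1/σ^2) * ((4*(x/σ)^2 - 2) * Real.exp (-(x/σ)^2)) := by
    have harg : -x^2/σ^2 = -(x/σ)^2 := by rw [div_pow]; ring
    rw [harg, div_pow]; field_simp
  rw [hrw, abs_mul, abs_of_nonneg (by positivity : (0:ℝ) ≤ 1/σ^2)]
  have := aux2 (x/σ)
  calc (1/σ^2) * |(4*(x/σ)^2 - 2) * Real.exp (-(x/σ)^2)| ≤ (1/σ^2) * 2 := by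
        apply mul_le_mul_of_nonneg_left this (by positivity)
    _ = 2/σ^2 := by ring

lemma bound3 (σ : ℝ) (hσ : 0 < σ) (x : ℝ) :
    |(12*x/σ^4 - 8*x^3/σ^6) * Real.exp (-x^2/σ^2)|
      ≤ 4 * Real.sqrt (9 - 3*Real.sqrt 6) * Real.exp (-((3 - Real.sqrt 6)/2)) / σ^3 := by
  have hσ' : σ ≠ 0 := ne_of_gt hσ
  have hrw : (12*x/σ^4 - 8*x^3/σ^6) * Real.exp (-x^2/σ^2)
      = (1/σ^3) * ((12*(x/σ) - 8*(x/σ)^3) * Real.exp (-(x/σ)^2)) := by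
    have harg : -x^2/σ^2 = -(x/σ)^2 := by rw [div_pow]; ring
    rw [harg, div_pow]; field_simp
  rw [hrw, abs_mul, abs_of_nonneg (by positivity : (0:ℝ) ≤ 1/σ^3)]
  have := aux3 (x/σ)
  calc (1/σ^3) * |(12*(x/σ) - 8*(x/σ)^3) * Real.exp (-(x/σ)^2)|
      ≤ (1/σ^3) * (4 * Real.sqrt (9 - 3*Real.sqrt 6) * Real.exp (-((3 - Real.sqrt 6)/2))) := by
        apply mul_le_mul_of_nonneg_left this (by positivity)
    _ = _ := by ring

lemma lip2 (σ : ℝ) (hσ : 0 < σ) (a b : ℝ) :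
    |deriv (deriv (fun t : ℝ => Real.exp (-t ^ 2 / σ ^ 2))) a
      - deriv (deriv (fun t : ℝ => Real.exp (-t ^ 2 / σ ^ 2))) b|
    ≤ (4 * Real.sqrt (9 - 3*Real.sqrt 6) * Real.exp (-((3 - Real.sqrt 6)/2)) / σ^3) * |a - b| := by
  have := Convex.norm_image_sub_le_of_norm_hasDerivWithin_le
    (f := deriv (deriv (fun t : ℝ => Real.exp (-t ^ 2 / σ ^ 2))))
    (f' := fun x => (12*x/σ^4 - 8*x^3/σ^6) * Real.exp (-x^2/σ^2))
    (s := Set.univ) (x := b) (y := a)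
    (fun x _ => (hasD2 σ hσ x).hasDerivWithinAt)
    (fun x _ => by rw [Real.norm_eq_abs]; exact bound3 σ hσ x)
    convex_univ (Set.mem_univ b) (Set.mem_univ a)
  simpa [Real.norm_eq_abs] using this

/-- On the ball of radius `δ₀`, the relative perturbation of
`∑ λ_j φ''(t - s_j)` from `q''(t*) = ∑ λ*_j φ''(t* - s_j)` is at most `1/2`. -/
theorem stmt1 (σ : ℝ) (hσ : 0 < σ) (m : ℕ) (s lamStar : Fin m → ℝ)
    (φ : ℝ → ℝ)
    (hφ : φ = fun t => Real.exp (-t ^ 2 / σ ^ 2))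
    (tStar : ℝ)
    (hq'' : (∑ j, lamStar j * deriv (deriv φ) (tStar - s j)) ≠ 0)
    (c δ₀ : ℝ)
    (hc : c = 4 * Real.sqrt (9 - 3 * Real.sqrt 6) * Real.exp (-((3 - Real.sqrt 6) / 2)))
    (hδ₀ : δ₀ = σ ^ 2 * |∑ j, lamStar j * deriv (deriv φ) (tStar - s j)| /
      (Real.sqrt m * (4 + 2 * c * Real.sqrt (∑ j, (lamStar j) ^ 2) / σ))) :
    ∀ t : ℝ, ∀ lam : Fin m → ℝ,
      |t - tStar| ≤ δ₀ →
      Real.sqrt (∑ j, (lam j - lamStar j) ^ 2) ≤ δ₀ →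
      |1 - (∑ j, lam j * deriv (deriv φ) (t - s j)) /
        (∑ j, lamStar j * deriv (deriv φ) (tStar - s j))| ≤ 1 / 2 := by
  subst hφ
  intro t lam ht hlam
  set F := deriv (deriv (fun t : ℝ => Real.exp (-t ^ 2 / σ ^ 2))) with hF
  set D := ∑ j, lamStar j * F (tStar - s j) with hD
  set N := ∑ j, lam j * F (t - s j) with hN
  set L := Real.sqrt (∑ j, (lamStar j) ^ 2) with hL
  -- m positive
  rcases Nat.eq_zero_or_pos m with hm | hm
  · subst hm; simp [hD] at hq''
  have hσ' : σ ≠ 0 := ne_of_gt hσ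
  have hsm : 0 < Real.sqrt m := Real.sqrt_pos.2 (by exact_mod_cast hm)
  have hδ0 : 0 ≤ δ₀ := le_trans (abs_nonneg _) ht
  have hc0 : 0 ≤ c := by rw [hc]; positivity
  have hL0 : 0 ≤ L := Real.sqrt_nonneg _
  -- split
  have hsplit : N - D = (∑ j, (lam j - lamStar j) * F (t - s j))
      + (∑ j, lamStar j * (F (t - s j) - F (tStar - s j))) := by
    rw [hN, hD, ← Finset.sum_add_distrib, ← Finset.sum_sub_distrib]
    apply Finset.sum_congr rfl
    intro j _; ring
  -- bound on term A
  have hA : |∑ j, (lam j - lamStar j) * F (t - s j)| ≤ δ₀ * (Real.sqrt m * (2/σ^2)) := by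
    have cs := Finset.sum_mul_sq_le_sq_mul_sq Finset.univ
      (fun j => lam j - lamStar j) (fun j => F (t - s j))
    have hb : (∑ j, (F (t - s j))^2) ≤ (m : ℝ) * (2/σ^2)^2 := by
      calc (∑ j, (F (t - s j))^2) ≤ ∑ _j : Fin m, (2/σ^2)^2 := by
            apply Finset.sum_le_sum
            intro j _
            rw [← sq_abs]
            exact pow_le_pow_left₀ (abs_nonneg _) (bound2 σ hσ _) 2
        _ = (m : ℝ) * (2/σ^2)^2 := by simp [Finset.card_univ]
    have h1 : |∑ j, (lam j - lamStar j) * F (t - s j)|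
        ≤ Real.sqrt (∑ j, (lam j - lamStar j)^2) * Real.sqrt (∑ j, (F (t - s j))^2) := by
      rw [← Real.sqrt_sq_eq_abs, ← Real.sqrt_mul (by positivity)]
      exact Real.sqrt_le_sqrt cs
    have h2 : Real.sqrt (∑ j, (F (t - s j))^2) ≤ Real.sqrt m * (2/σ^2) := by
      calc Real.sqrt (∑ j, (F (t - s j))^2) ≤ Real.sqrt ((m : ℝ) * (2/σ^2)^2) :=
            Real.sqrt_le_sqrt hb
        _ = Real.sqrt m * (2/σ^2) := by
            rw [Real.sqrt_mul (by positivity), Real.sqrt_sq (by positivity)]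
    calc |∑ j, (lam j - lamStar j) * F (t - s j)|
        ≤ Real.sqrt (∑ j, (lam j - lamStar j)^2) * Real.sqrt (∑ j, (F (t - s j))^2) := h1
      _ ≤ δ₀ * (Real.sqrt m * (2/σ^2)) := by
          apply mul_le_mul hlam h2 (Real.sqrt_nonneg _) hδ0
  -- bound on term B
  have hB : |∑ j, lamStar j * (F (t - s j) - F (tStar - s j))|
      ≤ L * (Real.sqrt m * (c/σ^3 * δ₀)) := by
    have hk0 : 0 ≤ c/σ^3 * δ₀ := by positivity
    have cs := Finset.sum_mul_sq_le_sq_mul_sq Finset.univ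
      (fun j => lamStar j) (fun j => F (t - s j) - F (tStar - s j))
    have hdel : ∀ j : Fin m, (F (t - s j) - F (tStar - s j))^2 ≤ (c/σ^3 * δ₀)^2 := by
      intro j
      have := lip2 σ hσ (t - s j) (tStar - s j)
      have harg : t - s j - (tStar - s j) = t - tStar := by ring
      rw [harg] at this
      have hle : |F (t - s j) - F (tStar - s j)| ≤ c/σ^3 * δ₀ := by
        calc |F (t - s j) - F (tStar - s j)|
            ≤ (4 * Real.sqrt (9 - 3*Real.sqrt 6) * Real.exp (-((3 - Real.sqrt 6)/2)) / σ^3)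
              * |t - tStar| := this
          _ ≤ c/σ^3 * δ₀ := by
              rw [hc]
              apply mul_le_mul_of_nonneg_left ht (by positivity)
      rw [← sq_abs]
      exact pow_le_pow_left₀ (abs_nonneg _) hle 2
    have hb : (∑ j, (F (t - s j) - F (tStar - s j))^2) ≤ (m : ℝ) * (c/σ^3 * δ₀)^2 := by
      calc (∑ j, (F (t - s j) - F (tStar - s j))^2) ≤ ∑ _j : Fin m, (c/σ^3 * δ₀)^2 :=
            Finset.sum_le_sum (fun j _ => hdel j)
        _ = (m : ℝ) * (c/σ^3 * δ₀)^2 := by simp [Finset.card_univ]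
    have h1 : |∑ j, lamStar j * (F (t - s j) - F (tStar - s j))|
        ≤ L * Real.sqrt (∑ j, (F (t - s j) - F (tStar - s j))^2) := by
      rw [hL, ← Real.sqrt_sq_eq_abs, ← Real.sqrt_mul (by positivity)]
      exact Real.sqrt_le_sqrt cs
    have h2 : Real.sqrt (∑ j, (F (t - s j) - F (tStar - s j))^2)
        ≤ Real.sqrt m * (c/σ^3 * δ₀) := by
      calc Real.sqrt (∑ j, (F (t - s j) - F (tStar - s j))^2)
          ≤ Real.sqrt ((m : ℝ) * (c/σ^3 * δ₀)^2) := Real.sqrt_le_sqrt hb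
        _ = Real.sqrt m * (c/σ^3 * δ₀) := by
            rw [Real.sqrt_mul (by positivity), Real.sqrt_sq hk0]
    calc |∑ j, lamStar j * (F (t - s j) - F (tStar - s j))|
        ≤ L * Real.sqrt (∑ j, (F (t - s j) - F (tStar - s j))^2) := h1
      _ ≤ L * (Real.sqrt m * (c/σ^3 * δ₀)) := mul_le_mul_of_nonneg_left h2 hL0
  -- total
  have heq : δ₀ * (Real.sqrt m * (2/σ^2)) + L * (Real.sqrt m * (c/σ^3 * δ₀)) = |D| / 2 := by
    rw [hδ₀]
    have hden : Real.sqrt m * (4 + 2 * c * L / σ) ≠ 0 := by positivity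
    field_simp
    ring
  have htot : |N - D| ≤ |D| / 2 := by
    calc |N - D| ≤ |∑ j, (lam j - lamStar j) * F (t - s j)|
          + |∑ j, lamStar j * (F (t - s j) - F (tStar - s j))| := by
          rw [hsplit]; exact abs_add_le _ _
      _ ≤ δ₀ * (Real.sqrt m * (2/σ^2)) + L * (Real.sqrt m * (c/σ^3 * δ₀)) := add_le_add hA hB
      _ = |D| / 2 := heq
  have hDne : D ≠ 0 := hq''
  have h1 : 1 - N / D = (D - N) / D := by field_simp
  rw [h1, abs_div, div_le_iff₀ (abs_pos.2 hDne)]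
  rw [abs_sub_comm] at htot
  linarith
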